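/- Soundness and completeness of the backward under-approximation (sufficient-incorrectness-logic-style) proof system (Theorem 4.5, Bwd-under column). For every regular command r and all sets of states P, Q ⊆ M: ⊢_SIL (P, r, Q) if and only if P ⊆ ⟦←r⟧ Q. -/

import Mathlib

/-! The backward semantics `⟦←r⟧` is the preimage under the relational semantics of `r`, because
`⟦r⟧` preserves arbitrary unions; equivalently `⟦r⟧ P` meets `Q` iff `P` meets `⟦←r⟧ Q`. This makes
`⟦←r⟧` monotone and compositional, with equations mirroring the rules:
`⟦←(r₁ ; r₂)⟧ = ⟦←r₁⟧ ∘ ⟦←r₂⟧`, `⟦←(r₁ + r₂)⟧ Q = ⟦←r₁⟧ Q ∪ ⟦←r₂⟧ Q` and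
`⟦←r*⟧ Q = ⋃ₙ ⟦←r⟧ⁿ Q`. Soundness is then an induction on derivations, and completeness follows
from (Cons) once `(⟦←r⟧ Q, r, Q)` is derived by induction on `r`, using the family
`Qₙ = ⟦←r⟧ⁿ Q` in (Iter). -/

namespace RegCmd

/-- Regular commands over a type `C` of atomic commands. -/
inductive Reg (C : Type) : Type
  | atom : C → Reg C
  | seq : Reg C → Reg C → Reg C
  | choice : Reg C → Reg C → Reg C
  | star : Reg C → Reg C

/-- Collecting (forward) semantics of regular commands. -/
def sem {C M : Type} (a : C → M → Set M) : Reg C → Set M → Set M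
  | .atom c => fun P => ⋃ σ ∈ P, a c σ
  | .seq r1 r2 => fun P => sem a r2 (sem a r1 P)
  | .choice r1 r2 => fun P => sem a r1 P ∪ sem a r2 P
  | .star r => fun P => ⋃ n : ℕ, (sem a r)^[n] P

/-- Backward semantics of regular commands. -/
def bsem {C M : Type} (a : C → M → Set M) (r : Reg C) (Q : Set M) : Set M :=
  {σ | (sem a r {σ} ∩ Q).Nonempty}

/-- The backward under-approximation (sufficient-incorrectness-logic-style)
proof system. -/
inductive SIL {C M : Type} (a : C → M → Set M) : Set M → Reg C → Set M → Prop
  | atom {c : C} {P Q : Set M} :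
      P ⊆ bsem a (.atom c) Q → SIL a P (.atom c) Q
  | seq {P S Q : Set M} {r1 r2 : Reg C} :
      SIL a P r1 S → SIL a S r2 Q → SIL a P (.seq r1 r2) Q
  | choice {P1 P2 Q : Set M} {r1 r2 : Reg C} :
      SIL a P1 r1 Q → SIL a P2 r2 Q → SIL a (P1 ∪ P2) (.choice r1 r2) Q
  | iter {Qs : ℕ → Set M} {r : Reg C} :
      (∀ n, SIL a (Qs (n + 1)) r (Qs n)) → SIL a (⋃ n, Qs n) (.star r) (Qs 0)
  | cons {P P' Q Q' : Set M} {r : Reg C} :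
      P ⊆ P' → SIL a P' r Q' → Q' ⊆ Q → SIL a P r Q

theorem iterate_iUnion {α ι : Type*} {f : Set α → Set α}
    (hf : ∀ s : ι → Set α, f (⋃ i, s i) = ⋃ i, f (s i)) (n : ℕ) (s : ι → Set α) :
    f^[n] (⋃ i, s i) = ⋃ i, f^[n] (s i) := by
  induction n generalizing s with
  | zero => rfl
  | succ n ih => simp only [Function.iterate_succ_apply, hf, ih]

theorem iterate_inter_nonempty_iff {α : Type*} {f g : Set α → Set α}
    (h : ∀ P Q, (f P ∩ Q).Nonempty ↔ (P ∩ g Q).Nonempty) (n : ℕ) (P Q : Set α) :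
    (f^[n] P ∩ Q).Nonempty ↔ (P ∩ g^[n] Q).Nonempty := by
  induction n generalizing P with
  | zero => rfl
  | succ n ih => rw [Function.iterate_succ_apply, ih, h, Function.iterate_succ_apply']

section

variable {C M : Type} (a : C → M → Set M)

theorem sem_iUnion {ι : Type*} (r : Reg C) (P : ι → Set M) :
    sem a r (⋃ i, P i) = ⋃ i, sem a r (P i) := by
  induction r generalizing ι with
  | atom c => exact Set.biUnion_iUnion P (a c)
  | seq r1 r2 ih1 ih2 => simp only [sem, ih1, ih2]
  | choice r1 r2 ih1 ih2 => simp only [sem, ih1, ih2, Set.iUnion_union_distrib]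
  | star r ih =>
    simp only [sem, iterate_iUnion fun s => ih s]
    exact Set.iUnion_comm _

theorem sem_eq_biUnion (r : Reg C) (P : Set M) :
    sem a r P = ⋃ σ ∈ P, sem a r {σ} := by
  conv_lhs => rw [← Set.biUnion_of_singleton P, Set.biUnion_eq_iUnion, sem_iUnion]
  exact Set.iUnion_subtype _ _

theorem sem_inter_nonempty_iff (r : Reg C) (P Q : Set M) :
    (sem a r P ∩ Q).Nonempty ↔ (P ∩ bsem a r Q).Nonempty := by
  rw [sem_eq_biUnion, Set.iUnion₂_inter, Set.nonempty_biUnion]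
  rfl

theorem bsem_mono (r : Reg C) : Monotone (bsem a r) :=
  fun _ _ hQ _ hσ => hσ.mono (Set.inter_subset_inter_right _ hQ)

theorem bsem_seq (r1 r2 : Reg C) (Q : Set M) :
    bsem a (.seq r1 r2) Q = bsem a r1 (bsem a r2 Q) :=
  Set.ext fun σ => sem_inter_nonempty_iff a r2 (sem a r1 {σ}) Q

theorem bsem_choice (r1 r2 : Reg C) (Q : Set M) :
    bsem a (.choice r1 r2) Q = bsem a r1 Q ∪ bsem a r2 Q :=
  Set.ext fun _ => by
    simp only [bsem, sem, Set.mem_ofPred_eq, Set.union_inter_distrib_right, Set.union_nonempty,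
      Set.mem_union]

theorem bsem_star (r : Reg C) (Q : Set M) :
    bsem a (.star r) Q = ⋃ n, (bsem a r)^[n] Q := by
  ext σ
  simp only [bsem, sem, Set.mem_ofPred_eq, Set.iUnion_inter, Set.nonempty_iUnion, Set.mem_iUnion,
    iterate_inter_nonempty_iff (sem_inter_nonempty_iff a r), Set.singleton_inter_nonempty]

variable {a} in
theorem SIL.subset_bsem {P Q : Set M} {r : Reg C} (h : SIL a P r Q) : P ⊆ bsem a r Q := by
  induction h with
  | atom h => exact h
  | seq _ _ ih1 ih2 => exact (bsem_seq a _ _ _).symm ▸ ih1.trans (bsem_mono a _ ih2)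
  | choice _ _ ih1 ih2 => exact (bsem_choice a _ _ _).symm ▸ Set.union_subset_union ih1 ih2
  | @iter Qs r _ ih =>
    have hQs (n : ℕ) : Qs n ⊆ (bsem a r)^[n] (Qs 0) :=
      (bsem_mono a r).seq_le_seq (y := fun n => (bsem a r)^[n] (Qs 0)) n le_rfl (fun k _ => ih k)
        (fun k _ => (Function.iterate_succ_apply' _ _ _).ge)
    exact (bsem_star a r _).symm ▸ Set.iUnion_mono hQs
  | cons hP _ hQ ih => exact hP.trans (ih.trans (bsem_mono a _ hQ))

theorem SIL_bsem (r : Reg C) (Q : Set M) : SIL a (bsem a r Q) r Q := by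
  induction r generalizing Q with
  | atom c => exact .atom subset_rfl
  | seq r1 r2 ih1 ih2 => exact bsem_seq a r1 r2 Q ▸ .seq (ih1 _) (ih2 Q)
  | choice r1 r2 ih1 ih2 => exact bsem_choice a r1 r2 Q ▸ .choice (ih1 Q) (ih2 Q)
  | star r ih =>
    rw [bsem_star]
    exact .iter (Qs := fun n => (bsem a r)^[n] Q) fun n => by
      rw [Function.iterate_succ_apply']
      exact ih _

end

/-- Theorem 4.5 (Bwd-under column): soundness and completeness of the
backward under-approximation (sufficient-incorrectness-logic-style)
proof system. -/
theorem SIL_sound_complete {C M : Type} (a : C → M → Set M)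
    (r : Reg C) (P Q : Set M) :
    SIL a P r Q ↔ P ⊆ bsem a r Q :=
  ⟨SIL.subset_bsem, fun h => .cons h (SIL_bsem a r Q) subset_rfl⟩

end RegCmd
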